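/- arXiv:2110.12397 — 2 statements merged into one kernel-verified Lean document; each statement's English description precedes it below -/
import Mathlib

section
/- Let X be a metric space, S ⊆ X a compact set, Γ ⊆ X a set (the solution set), A : X → Set X a point-to-set algorithmic map, and z : X → ℝ a continuous function. Assume: (i) for every x ∉ Γ and every y ∈ A x, z y < z x; (ii) for every x ∈ Γ and every y ∈ A x, z y ≤ z x; (iii) A is closed at every point x ∉ Γ, meaning that for every sequence (x_k) with x_k → x, every sequence (y_k) with y_k ∈ A x_k for all k and y_k → y, one has y ∈ A x. Let (x_k) be a sequence with x_{k+1} ∈ A x_k and x_k ∈ S for all k. Then the limit of every convergent subsequence of (x_k) belongs to Γ. -/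
/-!
Along the iterates the descent function is nonincreasing, so once `z (x (φ k)) → z L` the
whole sequence `z (x k)` is squeezed to `z L`, in particular along the successors
`x (φ k + 1)`. If `L ∉ Γ`, compactness gives a limit point `p` of those successors, closedness
of `A` at `L` puts `p` in `A L`, and then `z p = z L` contradicts strict descent at `L`.
-/

open Filter Topology

theorem Antitone.tendsto_comp_add_one_of_tendsto_comp {α : Type*} [TopologicalSpace α]
    [Preorder α] [OrderTopology α] {u : ℕ → α} (hu : Antitone u) {φ : ℕ → ℕ}
    (hφ : StrictMono φ) {c : α} (h : Tendsto (u ∘ φ) atTop (𝓝 c)) :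
    Tendsto (fun k => u (φ k + 1)) atTop (𝓝 c) :=
  tendsto_of_tendsto_of_tendsto_of_le_of_le ((tendsto_add_atTop_iff_nat 1).2 h) h
    (fun k => hu (hφ k.lt_succ_self)) (fun k => hu (φ k).le_succ)

theorem antitone_comp_of_mem_iterate {X : Type*} {A : X → Set X} {z : X → ℝ}
    (hz : ∀ x, ∀ y ∈ A x, z y ≤ z x) {x : ℕ → X} (hiter : ∀ k, x (k + 1) ∈ A (x k)) :
    Antitone (z ∘ x) :=
  antitone_nat_of_succ_le fun k => hz _ _ (hiter k)

/-- **Zangwill's global convergence theorem.** Let `X` be a metric space, `S` a compact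
subset, `Γ` the solution set, `A` a point-to-set algorithmic map and `z` a continuous
descent function for `(Γ, A)`. If `A` is closed at every point outside `Γ` and the
iterates `x_{k+1} ∈ A (x_k)` stay in `S`, then every convergent subsequence of the
iterates converges to a point of `Γ`. -/
theorem zangwill_global_convergence
    {X : Type*} [MetricSpace X]
    (S : Set X) (hS : IsCompact S)
    (Γ : Set X) (A : X → Set X) (z : X → ℝ) (hz : Continuous z)
    (hdescent_strict : ∀ x ∉ Γ, ∀ y ∈ A x, z y < z x)
    (hdescent : ∀ x ∈ Γ, ∀ y ∈ A x, z y ≤ z x)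
    (hclosed : ∀ x ∉ Γ, ∀ xk : ℕ → X, Tendsto xk atTop (𝓝 x) →
      ∀ yk : ℕ → X, (∀ k, yk k ∈ A (xk k)) → ∀ y : X, Tendsto yk atTop (𝓝 y) → y ∈ A x)
    (x : ℕ → X) (hiter : ∀ k, x (k + 1) ∈ A (x k)) (hxS : ∀ k, x k ∈ S) :
    ∀ φ : ℕ → ℕ, StrictMono φ → ∀ L : X, Tendsto (x ∘ φ) atTop (𝓝 L) → L ∈ Γ := by
  intro φ hφ L hL
  by_contra hLΓ
  have hanti : Antitone (z ∘ x) := antitone_comp_of_mem_iterate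
    (fun w y hy => (em (w ∈ Γ)).elim (hdescent w · y hy) (hdescent_strict w · y hy |>.le))
    hiter
  obtain ⟨p, -, ψ, hψ, hp⟩ := hS.tendsto_subseq fun k => hxS (φ k + 1)
  have hpA : p ∈ A L :=
    hclosed L hLΓ _ (hL.comp hψ.tendsto_atTop) _ (fun k => hiter (φ (ψ k))) p hp
  have hzL : Tendsto (fun k => z (x (φ k + 1))) atTop (𝓝 (z L)) :=
    hanti.tendsto_comp_add_one_of_tendsto_comp hφ ((hz.tendsto L).comp hL)
  have hzp : z p = z L :=
    tendsto_nhds_unique ((hz.tendsto p).comp hp) (hzL.comp hψ.tendsto_atTop)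
  exact (hdescent_strict L hLΓ p hpA).ne hzp
end

section
/- Let E be a real normed vector space and f : E → ℝ a continuous function. For x, d ∈ E define the line-search solution set Γ(x,d) = { y ∈ E | ∃ h ≥ 0, y = x + h • d, and f(y) ≤ f(x + h' • d) for all h' ≥ 0 }. Suppose (x_k), (d_k), (y_k) are sequences in E with x_k → x₀, d_k → d₀, ‖d_k‖ = 1 for every k, y_k ∈ Γ(x_k, d_k) for every k, and y_k → y₀. Then y₀ ∈ Γ(x₀, d₀). -/
open Filter Topology

/-- The line-search solution set: points on the ray from `x` in direction `d`
that minimize `f` along that ray. -/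
def lineSearchSet {E : Type*} [NormedAddCommGroup E] [NormedSpace ℝ E]
    (f : E → ℝ) (x d : E) : Set E :=
  {y | ∃ h : ℝ, 0 ≤ h ∧ y = x + h • d ∧ ∀ h' : ℝ, 0 ≤ h' → f y ≤ f (x + h' • d)}

/- Since `t i = ‖(x i + t i • d i) - x i‖ / ‖d i‖` as soon as `d i ≠ 0`, the step sizes
converge once the directions converge to a nonzero limit. -/
theorem tendsto_step_of_tendsto_add_smul {ι E : Type*} [NormedAddCommGroup E]
    [NormedSpace ℝ E] {l : Filter ι} {x d : ι → E} {t : ι → ℝ} {x₀ d₀ y₀ : E}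
    (ht : ∀ᶠ i in l, 0 ≤ t i) (hx : Tendsto x l (𝓝 x₀)) (hd : Tendsto d l (𝓝 d₀))
    (hd₀ : d₀ ≠ 0) (hy : Tendsto (fun i => x i + t i • d i) l (𝓝 y₀)) :
    Tendsto t l (𝓝 (‖y₀ - x₀‖ / ‖d₀‖)) := by
  have hlim : Tendsto (fun i => ‖(x i + t i • d i) - x i‖ / ‖d i‖) l
      (𝓝 (‖y₀ - x₀‖ / ‖d₀‖)) :=
    (hy.sub hx).norm.div hd.norm (norm_ne_zero_iff.mpr hd₀)
  refine hlim.congr' ?_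
  filter_upwards [ht, hd.eventually_ne hd₀] with i hti hdi
  rw [add_sub_cancel_left, norm_smul, Real.norm_of_nonneg hti,
    mul_div_cancel_right₀ _ (norm_ne_zero_iff.mpr hdi)]

/-- Closedness of the line-search solution map for unit directions. -/
theorem lineSearchSet_closed
    {E : Type*} [NormedAddCommGroup E] [NormedSpace ℝ E]
    (f : E → ℝ) (hf : Continuous f)
    (xk dk yk : ℕ → E) (x₀ d₀ y₀ : E)
    (hx : Tendsto xk atTop (𝓝 x₀))
    (hd : Tendsto dk atTop (𝓝 d₀))
    (hunit : ∀ k, ‖dk k‖ = 1)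
    (hy : ∀ k, yk k ∈ lineSearchSet f (xk k) (dk k))
    (hylim : Tendsto yk atTop (𝓝 y₀)) :
    y₀ ∈ lineSearchSet f x₀ d₀ := by
  have hd₀ : d₀ ≠ 0 := by
    have hnorm : ‖d₀‖ = 1 :=
      tendsto_nhds_unique hd.norm (by simp only [hunit, tendsto_const_nhds])
    exact norm_ne_zero_iff.mp (by rw [hnorm]; exact one_ne_zero)
  choose h h0 hyeq hmin using hy
  have hylim' : Tendsto (fun k => xk k + h k • dk k) atTop (𝓝 y₀) := by
    simpa only [← hyeq] using hylim
  have hh := tendsto_step_of_tendsto_add_smul (.of_forall h0) hx hd hd₀ hylim'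
  refine ⟨_, by positivity, tendsto_nhds_unique hylim' (hx.add (hh.smul hd)),
    fun h' h'0 => ?_⟩
  exact le_of_tendsto_of_tendsto' (hf.tendsto y₀ |>.comp hylim)
    (hf.tendsto _ |>.comp (hx.add (tendsto_const_nhds.smul hd))) (fun k => hmin k h' h'0)
end
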